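/- arXiv:0805.2493 — 12 statements merged into one kernel-verified Lean document; each statement's English description precedes it below -/
import Mathlib

section
/- Two unit cubes z+[0,1]^n and z'+[0,1]^n with z, z' in (1/N)Z^n, both contained in the torus R^n/2Z^n, have disjoint interiors if and only if there exists an index i in {1,...,n} such that z_i ≡ z'_i + 1 (mod 2). -/
/-!
Everything is coordinatewise: the image of a box in the torus is the product of the images of
its sides, so two images are disjoint iff they are disjoint in some coordinate. On the circle
`ℝ/2ℤ`, the images of `(a, a+1)` and `(b, b+1)` meet iff some translate `(b+2k, b+2k+1)` meets
`(a, a+1)`, i.e. iff `|a - b - 2k| < 1` for some integer `k`; this fails exactly when `a - b`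
is an odd integer. For `a = z/N`, `b = z'/N` that means `z ≡ z' + N (mod 2N)`.
-/

open Set

lemma exists_mem_Ioo_sub_eq_iff (a b d : ℝ) :
    (∃ x ∈ Ioo a (a + 1), ∃ y ∈ Ioo b (b + 1), x - y = d) ↔ |a - b - d| < 1 := by
  constructor
  · rintro ⟨x, ⟨hax, hxa⟩, y, ⟨hby, hyb⟩, rfl⟩
    rw [abs_lt]
    constructor <;> linarith
  · intro h
    rw [abs_lt] at h
    exact ⟨(a + b + d + 1) / 2, ⟨by linarith, by linarith⟩,
      (a + b - d + 1) / 2, ⟨by linarith, by linarith⟩, by ring⟩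

lemma exists_abs_sub_two_mul_lt_one_iff (c : ℝ) :
    (∃ k : ℤ, |c - 2 * k| < 1) ↔ ¬∃ m : ℤ, c = 2 * m + 1 := by
  constructor
  · rintro ⟨k, hk⟩ ⟨m, rfl⟩
    rw [abs_lt] at hk
    have hmk : m < k := by exact_mod_cast (show (m : ℝ) < k by linarith)
    have hkm : k < m + 1 := by exact_mod_cast (show (k : ℝ) < m + 1 by linarith)
    omega
  · intro hodd
    refine ⟨round (c / 2), ?_⟩
    have hround := abs_le.mp (abs_sub_round (c / 2))
    have hne : ∀ m : ℤ, c ≠ 2 * m + 1 := fun m hm => hodd ⟨m, hm⟩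
    have hlt : c - 2 * round (c / 2) < 1 :=
      lt_of_le_of_ne (by linarith) fun h => hne (round (c / 2)) (by linarith)
    have hgt : -1 < c - 2 * round (c / 2) :=
      lt_of_le_of_ne (by linarith) fun h => hne (round (c / 2) - 1) (by push_cast; linarith)
    exact abs_lt.mpr ⟨hgt, hlt⟩

lemma AddCircle.coe_eq_coe_iff_exists_sub_eq {p x y : ℝ} :
    (x : AddCircle p) = y ↔ ∃ k : ℤ, x - y = k * p := by
  rw [← sub_eq_zero, ← AddCircle.coe_sub, AddCircle.coe_eq_zero_iff]
  simp only [zsmul_eq_mul, eq_comm]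

lemma AddCircle.disjoint_image_Ioo_iff (a b : ℝ) :
    Disjoint ((↑) '' Ioo a (a + 1) : Set (AddCircle (2 : ℝ))) ((↑) '' Ioo b (b + 1)) ↔
      ∃ m : ℤ, a - b = 2 * m + 1 := by
  rw [← not_iff_not, not_disjoint_iff, ← exists_abs_sub_two_mul_lt_one_iff]
  simp_rw [← exists_mem_Ioo_sub_eq_iff]
  constructor
  · rintro ⟨_, ⟨x, hx, rfl⟩, y, hy, hxy⟩
    obtain ⟨k, hk⟩ := AddCircle.coe_eq_coe_iff_exists_sub_eq.mp hxy.symm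
    exact ⟨k, x, hx, y, hy, by rw [hk, mul_comm]⟩
  · rintro ⟨k, x, hx, y, hy, hk⟩
    refine ⟨x, ⟨x, hx, rfl⟩, y, hy, (AddCircle.coe_eq_coe_iff_exists_sub_eq.mpr ⟨k, ?_⟩).symm⟩
    rw [hk, mul_comm]

lemma exists_div_sub_div_eq_odd_iff {N : ℕ} (hN : N ≠ 0) (z z' : ℤ) :
    (∃ m : ℤ, (z : ℝ) / N - z' / N = 2 * m + 1) ↔
      (z : ZMod (2 * N)) = z' + N := by
  have hcast : (z' : ZMod (2 * N)) + N = ((z' + N : ℤ) : ZMod (2 * N)) := by push_cast; rfl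
  rw [hcast, eq_comm, ZMod.intCast_eq_intCast_iff_dvd_sub]
  refine exists_congr fun m => ?_
  rw [div_sub_div_same, div_eq_iff (Nat.cast_ne_zero.mpr hN), ← Int.cast_inj (α := ℝ)]
  push_cast
  constructor <;> intro h <;> linarith

theorem stmt_0_general (n N : ℕ) (hN : 1 ≤ N) (z z' : Fin n → ℤ) :
    Disjoint
      ((fun x : Fin n → ℝ => fun i => (QuotientAddGroup.mk (x i) : AddCircle (2 : ℝ))) ''
        {x : Fin n → ℝ | ∀ i, (z i : ℝ) / N < x i ∧ x i < (z i : ℝ) / N + 1})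
      ((fun x : Fin n → ℝ => fun i => (QuotientAddGroup.mk (x i) : AddCircle (2 : ℝ))) ''
        {x : Fin n → ℝ | ∀ i, (z' i : ℝ) / N < x i ∧ x i < (z' i : ℝ) / N + 1})
    ↔ ∃ i : Fin n, (z i : ZMod (2 * N)) = (z' i : ZMod (2 * N)) + (N : ZMod (2 * N)) := by
  have hbox : ∀ w : Fin n → ℤ,
      (fun x : Fin n → ℝ => fun i => (QuotientAddGroup.mk (x i) : AddCircle (2 : ℝ))) ''
        {x : Fin n → ℝ | ∀ i, (w i : ℝ) / N < x i ∧ x i < (w i : ℝ) / N + 1} =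
      univ.pi fun i => (↑) '' Ioo ((w i : ℝ) / N) ((w i : ℝ) / N + 1) := fun w => by
    rw [← piMap_image_univ_pi]
    congr 1
    ext x
    simp only [mem_ofPred_eq, mem_univ_pi, mem_Ioo]
  rw [hbox, hbox, disjoint_univ_pi]
  refine exists_congr fun i => ?_
  rw [AddCircle.disjoint_image_Ioo_iff, exists_div_sub_div_eq_odd_iff (by omega)]

/-- Two cubes `z/N + [0,1]^n`, `z'/N + [0,1]^n` in the torus
`ℝ^n / 2ℤ^n` have disjoint interiors iff some coordinate satisfies
`z_i ≡ z'_i + 1 (mod 2)`, i.e. the numerators satisfy `z_i ≡ z'_i + N (mod 2N)`. -/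
theorem stmt_0 (n N : ℕ) (hn : 1 ≤ n) (hN : 1 ≤ N) (z z' : Fin n → ℤ) :
    Disjoint
      ((fun x : Fin n → ℝ => fun i => (QuotientAddGroup.mk (x i) : AddCircle (2 : ℝ))) ''
        {x : Fin n → ℝ | ∀ i, (z i : ℝ) / N < x i ∧ x i < (z i : ℝ) / N + 1})
      ((fun x : Fin n → ℝ => fun i => (QuotientAddGroup.mk (x i) : AddCircle (2 : ℝ))) ''
        {x : Fin n → ℝ | ∀ i, (z' i : ℝ) / N < x i ∧ x i < (z' i : ℝ) / N + 1})
    ↔ ∃ i : Fin n, (z i : ZMod (2 * N)) = (z' i : ZMod (2 * N)) + (N : ZMod (2 * N)) :=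
  stmt_0_general n N hN z z'
end

section
/- In the discrete torus model, if (z^i)_{1≤i≤m} with z^i ∈ (1/N)Z^n is a family of translation vectors such that for every pair i ≠ i' there is a coordinate j with z^i_j ≡ z^{i'}_j + 1 (mod 2), and the family is non-extensible (no z ∈ (1/N)Z^n exists with z_j ≡ z^i_j + 1 (mod 2) in some coordinate for every i), then m ≥ n+1. -/
/-!
If `m ≤ n`, the `i`-th vector can be hit in the `i`-th coordinate for every `i` at once, so the
packing extends; this diagonal choice is the whole argument.
-/

section Diagonal

variable {ι κ α : Type*}

theorem Function.Injective.exists_forall_exists_eq [Nonempty α] {e : ι → κ}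
    (he : Function.Injective e) (t : ι → κ → α) : ∃ w : κ → α, ∀ i, ∃ j, w j = t i j :=
  ⟨Function.extend e (fun i => t i (e i)) fun _ => Classical.arbitrary α,
    fun i => ⟨e i, he.extend_apply _ _ i⟩⟩

theorem Fintype.card_lt_of_not_exists_forall_exists_eq [Fintype ι] [Fintype κ] [Nonempty α]
    (t : ι → κ → α) (h : ¬ ∃ w : κ → α, ∀ i, ∃ j, w j = t i j) :
    Fintype.card κ < Fintype.card ι := by
  by_contra! hle
  obtain ⟨e⟩ := Function.Embedding.nonempty_of_card_le hle
  exact h (e.injective.exists_forall_exists_eq t)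

end Diagonal

theorem stmt_1_general (n N m : ℕ) (z : Fin m → Fin n → ZMod (2 * N))
    (hnonext : ¬ ∃ w : Fin n → ZMod (2 * N), ∀ i, ∃ j, w j = z i j + (N : ZMod (2 * N))) :
    n + 1 ≤ m := by
  simpa using Fintype.card_lt_of_not_exists_forall_exists_eq (fun i j => z i j + N) hnonext

/-- A non-extensible discrete torus cube packing in dimension `n`
has at least `n+1` cubes.  Vectors in `(1/N)ℤ^n mod 2` are encoded by their
numerators in `ZMod (2N)`; the condition `z_j ≡ z'_j + 1 (mod 2)` becomes
`z_j = z'_j + N` in `ZMod (2N)`. -/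
theorem stmt_1 (n N m : ℕ) (hN : 1 ≤ N) (z : Fin m → Fin n → ZMod (2 * N))
    (hpack : ∀ i i', i ≠ i' → ∃ j, z i j = z i' j + (N : ZMod (2 * N)))
    (hnonext : ¬ ∃ w : Fin n → ZMod (2 * N), ∀ i, ∃ j, w j = z i j + (N : ZMod (2 * N))) :
    n + 1 ≤ m :=
  stmt_1_general n N m z hnonext
end

section
/- If m ≤ n and z^1,...,z^m ∈ (1/N)Z^n is any family of vectors with N ≥ 2, then there exists z ∈ (1/N)Z^n such that for every i ∈ {1,...,m}, the coordinate z_i satisfies z_i ≡ z^i_i + 1 (mod 2); consequently every torus cube packing with at most n cubes is extensible. -/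
theorem stmt_2_general (n N m : ℕ) (hm : m ≤ n) (z : Fin m → Fin n → ZMod (2 * N)) :
    (∃ w : Fin n → ZMod (2 * N),
      ∀ i : Fin m, w (Fin.castLE hm i) = z i (Fin.castLE hm i) + (N : ZMod (2 * N)))
    ∧ (∃ w : Fin n → ZMod (2 * N), ∀ i : Fin m, ∃ j, w j = z i j + (N : ZMod (2 * N))) := by
  obtain ⟨w, hw⟩ : ∃ w : Fin n → ZMod (2 * N),
      ∀ i : Fin m, w (Fin.castLE hm i) = z i (Fin.castLE hm i) + (N : ZMod (2 * N)) :=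
    ⟨Function.extend (Fin.castLE hm) (fun i => z i (Fin.castLE hm i) + (N : ZMod (2 * N))) 0,
      (Fin.castLE_injective hm).extend_apply _ _⟩
  exact ⟨⟨w, hw⟩, w, fun i => ⟨Fin.castLE hm i, hw i⟩⟩

/-- If `m ≤ n`, any family of `m` vectors in `(1/N)ℤ^n mod 2`
(numerators in `ZMod (2N)`) admits a vector `w` with `w_i ≡ z^i_i + 1 (mod 2)`
for every `i`; consequently every torus cube packing with at most `n` cubes is
extensible. -/
theorem stmt_2 (n N m : ℕ) (hN : 2 ≤ N) (hm : m ≤ n) (z : Fin m → Fin n → ZMod (2 * N)) :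
    (∃ w : Fin n → ZMod (2 * N),
      ∀ i : Fin m, w (Fin.castLE hm i) = z i (Fin.castLE hm i) + (N : ZMod (2 * N)))
    ∧ (∃ w : Fin n → ZMod (2 * N), ∀ i : Fin m, ∃ j, w j = z i j + (N : ZMod (2 * N))) :=
  stmt_2_general n N m hm z
end

section
/- Let G be a non-extensible combinatorial torus cube packing in dimension n. Then every parameter t that occurs in some coordinate of some cube of G also occurs as t+1 in that same coordinate of some (possibly different) cube of G. -/
/-! If `t + 1` never occurs in coordinate `j`, translate a cube with `t` in coordinate `j` by one
unit along `j`. The translate is separated at `j` from every cube with parameter `t` there, and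
every other cube was separated from the original cube in a coordinate other than `j`, which the
translation leaves unchanged. So the translate can be added to the packing. -/

/-- A combinatorial torus cube: each coordinate carries a formal parameter
(first component) together with a bit distinguishing `t` from `t+1`. -/
def IsPacking {ι : Type*} {n : ℕ} {α : Type*} (G : ι → Fin n → α × Bool) : Prop :=
  ∀ i i', i ≠ i' → ∃ j, (G i j).1 = (G i' j).1 ∧ (G i j).2 ≠ (G i' j).2

/-- A cube (possibly using fresh parameters, drawn from `ℕ`) can be added to the
packing, i.e. it does not overlap any cube of the packing. -/
def Addable {ι : Type*} {n : ℕ} {α : Type*} (G : ι → Fin n → α × Bool) : Prop :=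
  ∃ c : Fin n → (α ⊕ ℕ) × Bool,
    ∀ i, ∃ j, (c j).1 = Sum.inl (G i j).1 ∧ (c j).2 ≠ (G i j).2

def flipAt {n : ℕ} {α : Type*} (x : Fin n → α × Bool) (j : Fin n) : Fin n → (α ⊕ ℕ) × Bool :=
  fun k => (Sum.inl (x k).1, if k = j then !(x k).2 else (x k).2)

theorem IsPacking.addable_of_forall_ne_flip {ι : Type*} {n : ℕ} {α : Type*}
    {G : ι → Fin n → α × Bool} (hG : IsPacking G) {i₀ : ι} {j : Fin n}
    (hflip : ∀ i, G i j ≠ ((G i₀ j).1, !(G i₀ j).2)) : Addable G := by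
  refine ⟨flipAt (G i₀) j, fun i => ?_⟩
  by_cases hparam : (G i j).1 = (G i₀ j).1
  · have hbit : (G i j).2 = (G i₀ j).2 := by simpa [Prod.ext_iff, hparam] using hflip i
    exact ⟨j, by simp [flipAt, hparam], by simp [flipAt, hbit]⟩
  · obtain ⟨k, hk_param, hk_bit⟩ := hG i i₀ (by rintro rfl; exact hparam rfl)
    have hkj : k ≠ j := by rintro rfl; exact hparam hk_param
    exact ⟨k, by simp [flipAt, hk_param], by simpa [flipAt, hkj] using Ne.symm hk_bit⟩

theorem stmt_3_general {n m : ℕ} {α : Type*} (G : Fin m → Fin n → α × Bool)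
    (hpack : IsPacking G) (hnonext : ¬ Addable G) :
    ∀ (j : Fin n) (t : α) (b : Bool), (∃ i, G i j = (t, b)) → ∃ i', G i' j = (t, !b) := by
  rintro j t b ⟨i₀, hi₀⟩
  by_contra! hno
  exact hnonext (hpack.addable_of_forall_ne_flip (i₀ := i₀) (j := j) (by simpa [hi₀] using hno))

/-- In a non-extensible combinatorial torus cube packing, every
parameter occurring (as `t` or `t+1`) in some coordinate of some cube also
occurs with the opposite shift in that coordinate of some cube. -/
theorem stmt_3 {n m : ℕ} {α : Type*} (G : Fin m → Fin n → α × Bool)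
    (hpack : IsPacking G) (hsmall : m < 2 ^ n) (hnonext : ¬ Addable G) :
    ∀ (j : Fin n) (t : α) (b : Bool), (∃ i, G i j = (t, b)) → ∃ i', G i' j = (t, !b) :=
  stmt_3_general G hpack hnonext
end

section
/- Let G be a non-extensible combinatorial torus cube packing in dimension n, let C_1,...,C_k be cubes of G, and let G' = G \ {C_1,...,C_k}. If C is a cube that does not overlap with any cube of G', then the number of parameters of C that do not occur in G' is at most k-1. -/
/-- Two combinatorial torus cubes are non-overlapping iff some coordinate
carries the same parameter with opposite shifts (`t` vs `t+1`). -/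
def NonOverlap {n : ℕ} {α : Type*} (a b : Fin n → α × Bool) : Prop :=
  ∃ j, (a j).1 = (b j).1 ∧ (a j).2 ≠ (b j).2

/-!
If `C` had at least `k` parameters not occurring in `G'`, assign one of them injectively to each
removed cube `D ∈ S` and change `C` there to `D`'s parameter with the opposite shift. The new
cube meets every `D ∈ S` in its own coordinate, and still meets every cube of `G'` where `C` did,
since those coordinates carry parameters occurring in `G'`. It could therefore be added to `G`.
-/

namespace TorusCube

variable {n : ℕ} {α ι : Type*}

def freeCoords [DecidableEq α] (G' : Finset (Fin n → α × Bool)) (C : Fin n → α × Bool) :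
    Finset (Fin n) :=
  Finset.univ.filter fun j => ∀ D ∈ G', (D j).1 ≠ (C j).1

noncomputable def flipAt (f : ι → Fin n) (d : ι → Fin n → α × Bool) (C : Fin n → α × Bool) :
    Fin n → α × Bool :=
  Function.extend f (fun i => ((d i (f i)).1, !(d i (f i)).2)) C

lemma nonOverlap_flipAt {f : ι → Fin n} (hf : f.Injective) (d : ι → Fin n → α × Bool)
    (C : Fin n → α × Bool) (i : ι) : NonOverlap (flipAt f d C) (d i) :=
  ⟨f i, by simp [flipAt, hf.extend_apply]⟩

lemma flipAt_apply_of_notMem_range {f : ι → Fin n} (d : ι → Fin n → α × Bool)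
    (C : Fin n → α × Bool) {j : Fin n} (hj : j ∉ Set.range f) : flipAt f d C j = C j :=
  Function.extend_apply' _ _ _ hj

theorem exists_nonOverlap_of_card_le_freeCoords [DecidableEq α]
    {G' S : Finset (Fin n → α × Bool)} {C : Fin n → α × Bool}
    (hC : ∀ D ∈ G', NonOverlap C D) (hcard : S.card ≤ (freeCoords G' C).card) :
    ∃ c, (∀ D ∈ S, NonOverlap c D) ∧ ∀ D ∈ G', NonOverlap c D := by
  obtain ⟨φ⟩ : Nonempty (S ↪ freeCoords G' C) :=
    Function.Embedding.nonempty_of_card_le (by simpa using hcard)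
  set f : S → Fin n := fun D => (φ D : Fin n)
  have hf : f.Injective := Subtype.val_injective.comp φ.injective
  refine ⟨flipAt f Subtype.val C, fun D hD => nonOverlap_flipAt hf Subtype.val C ⟨D, hD⟩,
    fun D hD => ?_⟩
  obtain ⟨j, h1, h2⟩ := hC D hD
  have hj : j ∉ Set.range f := by
    rintro ⟨E, rfl⟩
    exact (Finset.mem_filter.1 (φ E).2).2 D hD h1.symm
  exact ⟨j, by rw [flipAt_apply_of_notMem_range _ _ hj]; exact ⟨h1, h2⟩⟩

end TorusCube

open TorusCube in
theorem stmt_4_general {n : ℕ} {α : Type*} [DecidableEq α]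
    (G S : Finset (Fin n → α × Bool))
    (hnonext : ¬ ∃ c : Fin n → (α ⊕ ℕ) × Bool,
      ∀ D ∈ G, ∃ j, (c j).1 = Sum.inl (D j).1 ∧ (c j).2 ≠ (D j).2)
    (C : Fin n → α × Bool)
    (hC : ∀ D ∈ G \ S, NonOverlap C D) :
    (Finset.univ.filter (fun j : Fin n => ∀ D ∈ G \ S, (D j).1 ≠ (C j).1)).card
      ≤ S.card - 1 := by
  by_contra! hlt
  have hcard : S.card ≤ (freeCoords (G \ S) C).card := by unfold freeCoords; omega
  obtain ⟨c, hcS, hcG'⟩ := exists_nonOverlap_of_card_le_freeCoords hC hcard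
  refine hnonext ⟨fun j => (Sum.inl (c j).1, (c j).2), fun D hD => ?_⟩
  obtain ⟨j, h1, h2⟩ : NonOverlap c D := by
    by_cases hDS : D ∈ S
    · exact hcS D hDS
    · exact hcG' D (Finset.mem_sdiff.2 ⟨hD, hDS⟩)
  exact ⟨j, congrArg Sum.inl h1, h2⟩

/-- Let `G` be a non-extensible combinatorial torus cube packing,
`S ⊆ G` a set of `k` cubes and `G' = G \ S`.  If a cube `C` does not overlap
any cube of `G'`, then the number of parameters (coordinates) of `C` not
occurring in `G'` is at most `k - 1`. -/
theorem stmt_4 {n : ℕ} {α : Type*} [DecidableEq α]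
    (G S : Finset (Fin n → α × Bool)) (hS : S ⊆ G)
    (hpack : ∀ a ∈ G, ∀ b ∈ G, a ≠ b → NonOverlap a b)
    (hsmall : G.card < 2 ^ n)
    (hnonext : ¬ ∃ c : Fin n → (α ⊕ ℕ) × Bool,
      ∀ D ∈ G, ∃ j, (c j).1 = Sum.inl (D j).1 ∧ (c j).2 ≠ (D j).2)
    (C : Fin n → α × Bool)
    (hC : ∀ D ∈ G \ S, NonOverlap C D) :
    (Finset.univ.filter (fun j : Fin n => ∀ D ∈ G \ S, (D j).1 ≠ (C j).1)).card
      ≤ S.card - 1 :=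
  stmt_4_general G S hnonext C hC
end

section
/- Let G be a non-extensible combinatorial torus cube packing in dimension n with exactly n+1 cubes. Then for every coordinate j and every parameter t, the number of cubes of G whose j-th coordinate equals t is exactly 1, and likewise the number of cubes whose j-th coordinate equals t+1 is exactly 1 (provided t occurs at all in coordinate j). Consequently n+1 is even, so no non-extensible combinatorial torus cube packing with n+1 cubes exists for even n, and when n is odd any such packing uses exactly n(n+1)/2 parameters. -/
open Finset Function

section Packing

variable {ι α : Type*} {n : ℕ} {G : ι → Fin n → α × Bool}

theorem addable_of_coordinate_choice (φ : ι → Fin n)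
    (hφ : ∀ i i', φ i = φ i' → G i (φ i) = G i' (φ i)) : Addable G := by
  classical
  refine ⟨fun j => if h : ∃ i, φ i = j then
      (Sum.inl (G h.choose j).1, !(G h.choose j).2) else (Sum.inr 0, true), fun i => ?_⟩
  have hex : ∃ i', φ i' = φ i := ⟨i, rfl⟩
  have hval : G hex.choose (φ i) = G i (φ i) := by
    simpa only [hex.choose_spec] using hφ _ _ hex.choose_spec
  refine ⟨φ i, ?_, ?_⟩ <;> simp [hval]

theorem addable_of_agree_of_card_compl_le [Fintype ι] [DecidableEq ι] (s : Finset ι) (j : Fin n)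
    (hs : ∀ i ∈ s, ∀ i' ∈ s, G i j = G i' j) (hcard : #sᶜ ≤ n - 1) : Addable G := by
  obtain ⟨e⟩ : Nonempty (↥sᶜ ↪ ↥({j}ᶜ : Finset (Fin n))) :=
    Function.Embedding.nonempty_of_card_le (by simpa [card_compl] using hcard)
  refine addable_of_coordinate_choice (fun i => if h : i ∈ sᶜ then (e ⟨i, h⟩).1 else j) ?_
  have hej : ∀ i h, (e ⟨i, h⟩).1 ≠ j := fun i h => mt mem_singleton.mpr (mem_compl.mp (e ⟨i, h⟩).2)
  intro i i' hii'
  by_cases hi : i ∈ sᶜ <;> by_cases hi' : i' ∈ sᶜ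
  · simp only [dif_pos hi, dif_pos hi'] at hii' ⊢
    cases congrArg Subtype.val (e.injective (Subtype.ext hii'))
    rfl
  · simp only [dif_pos hi, dif_neg hi'] at hii'
    exact absurd hii' (hej i hi)
  · simp only [dif_neg hi, dif_pos hi'] at hii'
    exact absurd hii'.symm (hej i' hi')
  · simp only [dif_neg hi]
    exact hs i (by simpa using hi) i' (by simpa using hi')

theorem injective_coord_of_not_addable [Fintype ι] (hcard : Fintype.card ι ≤ n + 1)
    (hnonext : ¬ Addable G) (j : Fin n) : Injective fun i => G i j := by
  classical
  intro i₁ i₂ heq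
  by_contra hne
  refine hnonext (addable_of_agree_of_card_compl_le {i₁, i₂} j ?_ ?_)
  · simp only [mem_insert, mem_singleton]
    rintro i (rfl | rfl) i' (rfl | rfl) <;> simp [heq]
  · rw [card_compl, card_pair hne]
    omega

theorem exists_eq_flip [Fintype ι] (hcard : n < Fintype.card ι) (hpack : IsPacking G)
    (hinj : ∀ j, Injective fun i => G i j) (i₀ : ι) (j₀ : Fin n) :
    ∃ i, G i j₀ = ((G i₀ j₀).1, !(G i₀ j₀).2) := by
  classical
  by_contra! hno
  let ψ : ι → Fin n := fun i => if h : i = i₀ then j₀ else (hpack i i₀ h).choose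
  have hflip : ∀ i, i ≠ i₀ → G i (ψ i) = ((G i₀ (ψ i)).1, !(G i₀ (ψ i)).2) := fun i h => by
    obtain ⟨h₁, h₂⟩ := (hpack i i₀ h).choose_spec
    simpa only [ψ, dif_neg h, Prod.ext_iff] using ⟨h₁, Bool.eq_not_iff.mpr h₂⟩
  have hne : ∀ i, i ≠ i₀ → ψ i ≠ j₀ := fun i h hj => hno i (hj ▸ hflip i h)
  have hψ : Injective ψ := by
    intro i i' hii'
    by_cases hi : i = i₀ <;> by_cases hi' : i' = i₀
    · exact hi.trans hi'.symm
    · exact absurd (hii'.symm.trans (by simp [ψ, hi])) (hne i' hi')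
    · exact absurd (hii'.trans (by simp [ψ, hi'])) (hne i hi)
    · exact hinj (ψ i) ((hflip i hi).trans (hii' ▸ (hflip i' hi').symm))
  exact absurd (Fintype.card_le_of_injective ψ hψ) (by simpa using hcard)

end Packing

theorem Fintype.card_eq_card_image_fst_mul_two {γ β : Type*} [Fintype γ] [DecidableEq β]
    {f : γ → β × Bool} (hf : Injective f) (hflip : ∀ c, ∃ c', f c' = ((f c).1, !(f c).2)) :
    Fintype.card γ = #(univ.image fun c => (f c).1) * 2 := by
  have himage : univ.image f = (univ.image fun c => (f c).1) ×ˢ univ := by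
    ext ⟨t, b⟩
    simp only [mem_image, mem_univ, true_and, mem_product, and_true]
    refine ⟨fun ⟨c, hc⟩ => ⟨c, by rw [hc]⟩, fun ⟨c, hc⟩ => ?_⟩
    by_cases hb : (f c).2 = b
    · exact ⟨c, Prod.ext hc hb⟩
    · obtain ⟨c', hc'⟩ := hflip c
      exact ⟨c', by rw [hc', hc, ← Bool.eq_not_iff.mpr (Ne.symm hb)]⟩
  rw [← card_univ, ← card_image_of_injective univ hf, himage, card_product, card_univ,
    Fintype.card_bool]

theorem card_filter_eq_one_of_injective {γ β : Type*} [Fintype γ] [DecidableEq β]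
    {f : γ → β} (hf : Injective f) {x : β} (hx : ∃ c, f c = x) :
    #(univ.filter fun c => f c = x) = 1 := by
  obtain ⟨c, rfl⟩ := hx
  exact card_eq_one.mpr ⟨c, by ext; simp [hf.eq_iff]⟩

/-- In a non-extensible combinatorial torus cube packing with
exactly `n+1` cubes, every parameter occurring in a coordinate occurs there
exactly once as `t` and exactly once as `t+1`; consequently `n+1` is even
(so no such packing exists for even `n`) and the packing uses exactly
`n(n+1)/2` parameters (counted as pairs (coordinate, parameter)). -/
theorem stmt_5 {n : ℕ} {α : Type*} [DecidableEq α]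
    (G : Fin (n + 1) → Fin n → α × Bool)
    (hpack : IsPacking G) (hsmall : n + 1 < 2 ^ n) (hnonext : ¬ Addable G) :
    (∀ (j : Fin n) (t : α) (b : Bool), (∃ i, G i j = (t, b)) →
      (Finset.univ.filter (fun i => G i j = (t, b))).card = 1 ∧
      (Finset.univ.filter (fun i => G i j = (t, !b))).card = 1)
    ∧ Even (n + 1)
    ∧ ((Finset.univ : Finset (Fin (n + 1) × Fin n)).image
        (fun q => (q.2, (G q.1 q.2).1))).card = n * (n + 1) / 2 := by
  have hn : 0 < n := Nat.pos_of_ne_zero (by rintro rfl; simp at hsmall)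
  have hinj := injective_coord_of_not_addable (by simp) hnonext
  have hflip := exists_eq_flip (by simp) hpack hinj
  refine ⟨fun j t b ⟨i, hi⟩ => ?_, ?_, ?_⟩
  · obtain ⟨i', hi'⟩ := hflip i j
    rw [hi] at hi'
    exact ⟨card_filter_eq_one_of_injective (hinj j) ⟨i, hi⟩,
      card_filter_eq_one_of_injective (hinj j) ⟨i', hi'⟩⟩
  · have hcol := Fintype.card_eq_card_image_fst_mul_two (hinj ⟨0, hn⟩) (hflip · _)
    rw [Fintype.card_fin] at hcol
    exact ⟨_, hcol.trans (mul_two _)⟩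
  · have hall := Fintype.card_eq_card_image_fst_mul_two
      (f := fun q : Fin (n + 1) × Fin n => ((q.2, (G q.1 q.2).1), (G q.1 q.2).2))
      (fun ⟨i, j⟩ ⟨i', j'⟩ h => by
        simp only [Prod.mk.injEq] at h
        obtain ⟨⟨rfl, h₁⟩, h₂⟩ := h
        rw [hinj j (Prod.ext h₁ h₂)])
      (fun ⟨i, j⟩ => let ⟨i', h⟩ := hflip i j; ⟨(i', j), by simp [h]⟩)
    rw [Fintype.card_prod, Fintype.card_fin, Fintype.card_fin, mul_comm] at hall
    dsimp only at hall
    omega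
end

section
/- Let G be a combinatorial torus cube tiling in dimension n (2^n pairwise non-overlapping cubes). Then for every coordinate j and every parameter t occurring in coordinate j, the number of cubes whose j-th coordinate equals t is equal to the number of cubes whose j-th coordinate equals t+1. -/
/-!
Realise the tiling on the discrete torus `(Bool → Bool)ⁿ ≅ ((ℤ/2)²)ⁿ`, sending the coordinate
value `(a, b)` to the half `{x | x (σ a) = b}`, where `σ a` records whether `a = t`. Collapsing
all other parameters onto one axis keeps the packing property, since it only concerns a shared
parameter with opposite bits, and such halves are complementary. So the `2ⁿ` cubes of `2ⁿ` points
each tile the `4ⁿ` points, and every slice `x j = c` meets exactly `2ⁿ⁻¹` of them. The cubes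
through `c = fun _ => false` are those with bit `false` in coordinate `j`; the cubes through
`c = id` are those with `(t, true)` or `(a, false)`, `a ≠ t`. Comparing the two slices gives
the claim.
-/

open Finset Fintype Function

theorem card_filter_mem_mul_pow_of_biUnion_eq_univ {ι κ β : Type*} [Fintype ι] [Fintype κ]
    [DecidableEq κ] [Fintype β] [DecidableEq β] (S : ι → κ → Finset β) {m : ℕ}
    (hcard : ∀ i j, #(S i j) = m) (hdisj : Pairwise (Disjoint on fun i => piFinset (S i)))
    (hcover : univ.biUnion (fun i => piFinset (S i)) = univ) (j : κ) (c : β) :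
    #{i | c ∈ S i j} * m ^ (card κ - 1) = card β ^ (card κ - 1) := by
  have hslice : ∀ i,
      #{x ∈ piFinset (S i) | x j = c} = if c ∈ S i j then m ^ (card κ - 1) else 0 := by
    intro i
    rw [card_filter_piFinset_eq (S i) j c, prod_congr rfl fun j' _ => hcard i j', prod_const,
      card_erase_of_mem (mem_univ j), card_univ]
  calc #{i | c ∈ S i j} * m ^ (card κ - 1)
      = ∑ i, #{x ∈ piFinset (S i) | x j = c} := by
        simp only [hslice, sum_ite, sum_const_zero, sum_const, smul_eq_mul, add_zero]
    _ = #{x ∈ univ.biUnion (fun i => piFinset (S i)) | x j = c} := by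
        rw [filter_biUnion, card_biUnion fun i _ i' _ h => disjoint_filter_filter (hdisj h)]
    _ = card β ^ (card κ - 1) := by
        rw [hcover, ← piFinset_univ, card_filter_piFinset_const_eq_of_mem _ _ (mem_univ c),
          card_univ]

def half (k b : Bool) : Finset (Bool → Bool) := {x | x k = b}

theorem card_half (k b : Bool) : #(half k b) = 2 := by
  revert k b
  decide

theorem disjoint_half (k : Bool) {b b' : Bool} (h : b ≠ b') : Disjoint (half k b) (half k b') :=
  disjoint_filter.mpr fun _ _ hb hb' => h (hb.symm.trans hb')

section Cube

variable {n : ℕ} {α : Type*}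

def cube (σ : α → Bool) (g : Fin n → α × Bool) : Finset (Fin n → Bool → Bool) :=
  piFinset fun j => half (σ (g j).1) (g j).2

theorem card_cube (σ : α → Bool) (g : Fin n → α × Bool) : #(cube σ g) = 2 ^ n := by
  simp [cube, card_half]

theorem IsPacking.pairwise_disjoint_cube {ι : Type*} {G : ι → Fin n → α × Bool}
    (hG : IsPacking G) (σ : α → Bool) : Pairwise (Disjoint on fun i => cube σ (G i)) := by
  intro i i' hne
  obtain ⟨j, hparam, hbit⟩ := hG i i' hne
  refine piFinset_disjoint_of_disjoint _ _ (a := j) ?_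
  rw [hparam]
  exact disjoint_half _ hbit

theorem IsPacking.biUnion_cube_eq_univ {G : Fin (2 ^ n) → Fin n → α × Bool} (hG : IsPacking G)
    (σ : α → Bool) : univ.biUnion (fun i => cube σ (G i)) = univ := by
  refine eq_univ_of_card _ ?_
  rw [card_biUnion fun i _ i' _ h => hG.pairwise_disjoint_cube σ h, sum_congr rfl fun i _ =>
    card_cube σ (G i)]
  simp [← pow_add, ← two_mul, pow_mul]

end Cube

/-- In a combinatorial torus cube tiling (`2^n` pairwise
non-overlapping cubes), for each coordinate `j` and each parameter `t`,
the number of cubes carrying `t` in coordinate `j` equals the number of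
cubes carrying `t+1` there. -/
theorem stmt_9 {n : ℕ} {α : Type*} [DecidableEq α]
    (G : Fin (2 ^ n) → Fin n → α × Bool) (hpack : IsPacking G) :
    ∀ (j : Fin n) (t : α),
      (Finset.univ.filter (fun i => G i j = (t, false))).card =
      (Finset.univ.filter (fun i => G i j = (t, true))).card := by
  intro j t
  set σ : α → Bool := fun a => decide (a = t)
  have hslice := card_filter_mem_mul_pow_of_biUnion_eq_univ
    (fun i j => half (σ (G i j).1) (G i j).2) (fun _ _ => card_half _ _)
    (hpack.pairwise_disjoint_cube σ) (hpack.biUnion_cube_eq_univ σ) j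
  have hslices : #{i | (fun _ => false) ∈ half (σ (G i j).1) (G i j).2}
      = #{i | id ∈ half (σ (G i j).1) (G i j).2} :=
    Nat.eq_of_mul_eq_mul_right (by positivity) ((hslice _).trans (hslice _).symm)
  have hpoint : ∀ p : α × Bool,
      ((if (fun _ => false) ∈ half (σ p.1) p.2 then 1 else 0) + if p = (t, true) then 1 else 0)
        = (if id ∈ half (σ p.1) p.2 then 1 else 0) + if p = (t, false) then 1 else 0 := by
    rintro ⟨a, _ | _⟩ <;> by_cases ha : a = t <;> simp [half, σ, ha]
  have hsum := sum_congr rfl fun i (_ : i ∈ univ) => hpoint (G i j)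
  simp only [sum_add_distrib, ← card_filter] at hsum
  omega
end

section
/- With G, G' combinatorial torus cube packings of dimensions n, n', the twisted product G ⋉ G' is extensible if and only if G is extensible or G' is extensible. Equivalently, G ⋉ G' is non-extensible if and only if both G and G' are non-extensible. -/
def twisted {n n' m m' : ℕ} {α β : Type*}
    (G : Fin m → Fin n → α × Bool) (G' : Fin m' → Fin n' → β × Bool) :
    Fin m × Fin m' → Fin (n + n') → (α ⊕ Fin m × β) × Bool :=
  fun p k =>
    Fin.addCases (motive := fun _ => (α ⊕ Fin m × β) × Bool)
      (fun j => ((Sum.inl (G p.1 j).1), (G p.1 j).2))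
      (fun j => ((Sum.inr (p.1, (G' p.2 j).1)), (G' p.2 j).2)) k

/-- The cube `c`, whose parameters live in `γ`, does not overlap the cube `x` once the
parameters of `x` are read in `γ` through `e`. -/
def Separates {n : ℕ} {α γ : Type*} (e : α → γ) (c : Fin n → γ × Bool) (x : Fin n → α × Bool) :
    Prop :=
  ∃ j, (c j).1 = e (x j).1 ∧ (c j).2 ≠ (x j).2

section Separates

variable {n : ℕ} {ι α γ δ : Type*}

theorem Separates.map {e : α → γ} {c : Fin n → γ × Bool} {x : Fin n → α × Bool}
    (h : Separates e c x) (f : γ → δ) :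
    Separates (f ∘ e) (fun j => (f (c j).1, (c j).2)) x := by
  obtain ⟨j, hparam, hside⟩ := h
  exact ⟨j, congrArg f hparam, hside⟩

theorem isPacking_iff_separates {G : ι → Fin n → α × Bool} :
    IsPacking G ↔ ∀ i i', i ≠ i' → Separates id (G i) (G i') :=
  Iff.rfl

theorem addable_iff_separates {G : ι → Fin n → α × Bool} :
    Addable G ↔ ∃ c : Fin n → (α ⊕ ℕ) × Bool, ∀ i, Separates Sum.inl c (G i) :=
  Iff.rfl

theorem addable_of_separates {G : ι → Fin n → α × Bool} {e : α → γ}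
    (he : e.Injective) (c : Fin n → γ × Bool) (hc : ∀ i, Separates e c (G i)) :
    Addable G := by
  let retract : γ → α ⊕ ℕ := Function.extend e Sum.inl fun _ => Sum.inr 0
  have hretract : retract ∘ e = Sum.inl := funext (he.extend_apply Sum.inl fun _ => Sum.inr 0)
  refine addable_iff_separates.2 ⟨fun j => (retract (c j).1, (c j).2), fun i => ?_⟩
  rw [← hretract]
  exact (hc i).map retract

end Separates

section Twisted

variable {n n' m m' : ℕ} {α β γ : Type*}
  {G : Fin m → Fin n → α × Bool} {G' : Fin m' → Fin n' → β × Bool}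

theorem separates_twisted_iff {e : α ⊕ Fin m × β → γ} {c : Fin (n + n') → γ × Bool}
    {i : Fin m} {i' : Fin m'} :
    Separates e c (twisted G G' (i, i')) ↔
      Separates (e ∘ Sum.inl) (c ∘ Fin.castAdd n') (G i) ∨
        Separates (fun b => e (Sum.inr (i, b))) (c ∘ Fin.natAdd n) (G' i') := by
  constructor
  · rintro ⟨k, hk⟩
    induction k using Fin.addCases with
    | left j => exact Or.inl ⟨j, by simpa [twisted] using hk⟩
    | right j => exact Or.inr ⟨j, by simpa [twisted] using hk⟩
  · rintro (⟨j, hj⟩ | ⟨j, hj⟩)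
    · exact ⟨Fin.castAdd n' j, by simpa [twisted] using hj⟩
    · exact ⟨Fin.natAdd n j, by simpa [twisted] using hj⟩

theorem addable_or_addable_of_addable_twisted (h : Addable (twisted G G')) :
    Addable G ∨ Addable G' := by
  obtain ⟨c, hc⟩ := addable_iff_separates.1 h
  by_cases hfirst : ∀ i, Separates (Sum.inl ∘ Sum.inl) (c ∘ Fin.castAdd n') (G i)
  · exact Or.inl (addable_of_separates (Sum.inl_injective.comp Sum.inl_injective) _ hfirst)
  · push Not at hfirst
    obtain ⟨i, hi⟩ := hfirst
    have hinj : (fun b : β => (Sum.inl (Sum.inr (i, b)) : (α ⊕ Fin m × β) ⊕ ℕ)).Injective :=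
      fun b b' hb => by simpa using hb
    exact Or.inr <| addable_of_separates hinj _ fun i' =>
      (separates_twisted_iff.1 (hc (i, i'))).resolve_left hi

theorem separates_twisted_append_iff {e : α ⊕ Fin m × β → γ} {u : Fin n → γ × Bool}
    {v : Fin n' → γ × Bool} {i : Fin m} {i' : Fin m'} :
    Separates e (Fin.append u v) (twisted G G' (i, i')) ↔
      Separates (e ∘ Sum.inl) u (G i) ∨ Separates (fun b => e (Sum.inr (i, b))) v (G' i') := by
  simp only [separates_twisted_iff, Function.comp_def, Fin.append_left, Fin.append_right]

theorem addable_twisted_of_addable_left (h : Addable G) : Addable (twisted G G') := by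
  obtain ⟨c, hc⟩ := addable_iff_separates.1 h
  exact addable_iff_separates.2
    ⟨Fin.append (fun j => (Sum.map Sum.inl id (c j).1, (c j).2)) fun _ => (Sum.inr 0, true),
      fun p => separates_twisted_append_iff.2 (Or.inl ((hc p.1).map (Sum.map Sum.inl id)))⟩

theorem addable_twisted_of_addable_right (hG : IsPacking G) (h : Addable G') :
    Addable (twisted G G') := by
  rcases isEmpty_or_nonempty (Fin m) with hm | ⟨⟨i⟩⟩
  · exact ⟨fun _ => (Sum.inr 0, true), fun p => isEmptyElim p.1⟩
  obtain ⟨c, hc⟩ := addable_iff_separates.1 h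
  let liftG' : β ⊕ ℕ → (α ⊕ Fin m × β) ⊕ ℕ := Sum.map (fun b => Sum.inr (i, b)) id
  refine addable_iff_separates.2
    ⟨Fin.append (fun j => (Sum.inl (Sum.inl (G i j).1), (G i j).2))
      (fun j => (liftG' (c j).1, (c j).2)),
      fun ⟨k, k'⟩ => separates_twisted_append_iff.2 ?_⟩
  rcases eq_or_ne i k with rfl | hik
  · exact Or.inr ((hc k').map liftG')
  · exact Or.inl ((isPacking_iff_separates.1 hG i k hik).map (Sum.inl ∘ Sum.inl))

end Twisted

theorem stmt_11_general {n n' m m' : ℕ} {α β : Type*}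
    (G : Fin m → Fin n → α × Bool) (G' : Fin m' → Fin n' → β × Bool)
    (hG : IsPacking G) :
    Addable (twisted G G') ↔ Addable G ∨ Addable G' :=
  ⟨addable_or_addable_of_addable_twisted, fun h =>
    h.elim addable_twisted_of_addable_left (addable_twisted_of_addable_right hG)⟩

/-- The twisted product `G ⋉ G'` admits an additional
non-overlapping cube iff `G` does or `G'` does. -/
theorem stmt_11 {n n' m m' : ℕ} {α β : Type*}
    (G : Fin m → Fin n → α × Bool) (G' : Fin m' → Fin n' → β × Bool)
    (hG : IsPacking G) (hG' : IsPacking G') :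
    Addable (twisted G G') ↔ Addable G ∨ Addable G' :=
  stmt_11_general G G' hG
end

section
/- Let f(n) denote the minimal number of cubes of a non-extensible combinatorial torus cube packing in dimension n (set f(n) = 2^n if none exists). Then f is submultiplicative: f(n+m) ≤ f(n)·f(m) for all n, m ≥ 1 for which non-extensible packings exist in dimensions n and m. -/
/-- The minimal number of cubes of a non-extensible combinatorial torus cube
packing in dimension `n` (equal to `2^n` if none exists). -/
noncomputable def fT (n : ℕ) : ℕ :=
  sInf ({m | ∃ G : Fin m → Fin n → ℕ × Bool,
          IsPacking G ∧ m < 2 ^ n ∧ ¬ Addable G} ∪ {2 ^ n})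

section Packing

variable {ι ι' κ α : Type*} {n m : ℕ}

def packingProd (G : ι → Fin n → α × Bool) (G' : ι' → Fin m → α × Bool) :
    ι × ι' → Fin (n + m) → α × Bool :=
  fun p => Fin.append (G p.1) (G' p.2)

variable {G : ι → Fin n → α × Bool} {G' : ι' → Fin m → α × Bool}

theorem IsPacking.comp_injective (hG : IsPacking G) {e : κ → ι} (he : e.Injective) :
    IsPacking (G ∘ e) :=
  fun _ _ hne => hG _ _ (he.ne hne)

theorem Addable.of_comp_surjective {e : κ → ι} (he : e.Surjective) (h : Addable (G ∘ e)) :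
    Addable G := by
  obtain ⟨c, hc⟩ := h
  refine ⟨c, fun i => ?_⟩
  obtain ⟨k, rfl⟩ := he i
  exact hc k

theorem IsPacking.packingProd (hG : IsPacking G) (hG' : IsPacking G') :
    IsPacking (packingProd G G') := by
  rintro ⟨i, i'⟩ ⟨k, k'⟩ hne
  by_cases hik : i = k
  · subst hik
    obtain ⟨j, hj⟩ := hG' i' k' fun h => hne (h ▸ rfl)
    exact ⟨Fin.natAdd n j, by simpa only [_root_.packingProd, Fin.append_right] using hj⟩
  · obtain ⟨j, hj⟩ := hG i k hik
    exact ⟨Fin.castAdd m j, by simpa only [_root_.packingProd, Fin.append_left] using hj⟩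

theorem not_addable_packingProd (hG : ¬ Addable G) (hG' : ¬ Addable G') :
    ¬ Addable (packingProd G G') := by
  rintro ⟨c, hc⟩
  simp only [Addable, not_exists, not_forall, not_and, not_not] at hG hG'
  obtain ⟨i, hi⟩ := hG (c ∘ Fin.castAdd m)
  obtain ⟨i', hi'⟩ := hG' (c ∘ Fin.natAdd n)
  obtain ⟨j, hj, hj'⟩ := hc (i, i')
  induction j using Fin.addCases with
  | left j =>
    simp only [packingProd, Fin.append_left] at hj hj'
    exact hj' (hi j hj)
  | right j =>
    simp only [packingProd, Fin.append_right] at hj hj'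
    exact hj' (hi' j hj)

end Packing

theorem fT_le {n k : ℕ} {G : Fin k → Fin n → ℕ × Bool} (hG : IsPacking G) (hk : k < 2 ^ n)
    (hadd : ¬ Addable G) : fT n ≤ k :=
  Nat.sInf_le (Or.inl ⟨G, hG, hk, hadd⟩)

theorem exists_nonExtensible_card_fT {n : ℕ}
    (hex : ∃ (k : ℕ) (G : Fin k → Fin n → ℕ × Bool), IsPacking G ∧ k < 2 ^ n ∧ ¬ Addable G) :
    ∃ G : Fin (fT n) → Fin n → ℕ × Bool, IsPacking G ∧ fT n < 2 ^ n ∧ ¬ Addable G := by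
  obtain ⟨k, G, hG, hk, hadd⟩ := hex
  have hlt : fT n < 2 ^ n := (fT_le hG hk hadd).trans_lt hk
  have hne : Set.Nonempty ({m | ∃ G : Fin m → Fin n → ℕ × Bool,
      IsPacking G ∧ m < 2 ^ n ∧ ¬ Addable G} ∪ {2 ^ n}) := ⟨k, Or.inl ⟨G, hG, hk, hadd⟩⟩
  rcases Nat.sInf_mem hne with ⟨G', hG', -, hadd'⟩ | h
  · exact ⟨G', hG', hlt, hadd'⟩
  · exact absurd h hlt.ne

theorem stmt_12_general (n m : ℕ)
    (hex_n : ∃ (k : ℕ) (G : Fin k → Fin n → ℕ × Bool),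
      IsPacking G ∧ k < 2 ^ n ∧ ¬ Addable G)
    (hex_m : ∃ (k : ℕ) (G : Fin k → Fin m → ℕ × Bool),
      IsPacking G ∧ k < 2 ^ m ∧ ¬ Addable G) :
    fT (n + m) ≤ fT n * fT m := by
  obtain ⟨G, hG, hltn, haddG⟩ := exists_nonExtensible_card_fT hex_n
  obtain ⟨G', hG', hltm, haddG'⟩ := exists_nonExtensible_card_fT hex_m
  let e : Fin (fT n * fT m) ≃ Fin (fT n) × Fin (fT m) := finProdFinEquiv.symm
  refine fT_le ((hG.packingProd hG').comp_injective e.injective) ?_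
    fun h => not_addable_packingProd haddG haddG' (h.of_comp_surjective e.surjective)
  calc fT n * fT m < 2 ^ n * 2 ^ m := Nat.mul_lt_mul'' hltn hltm
    _ = 2 ^ (n + m) := (pow_add 2 n m).symm

/-- `fT` is submultiplicative: `fT (n+m) ≤ fT n · fT m`, for
dimensions `n, m ≥ 1` in which non-extensible packings exist. -/
theorem stmt_12 (n m : ℕ) (hn : 1 ≤ n) (hm : 1 ≤ m)
    (hex_n : ∃ (k : ℕ) (G : Fin k → Fin n → ℕ × Bool),
      IsPacking G ∧ k < 2 ^ n ∧ ¬ Addable G)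
    (hex_m : ∃ (k : ℕ) (G : Fin k → Fin m → ℕ × Bool),
      IsPacking G ∧ k < 2 ^ m ∧ ¬ Addable G) :
    fT (n + m) ≤ fT n * fT m :=
  stmt_12_general n m hex_n hex_m
end

section
/- Let G be a non-extensible combinatorial torus cube packing in dimension n, obtained by sequentially adding cubes C^1, C^2, ..., C^m such that each newly added cube introduces the maximal possible number of new parameters at each step (a 'strictly positive probability' path). Let N_k denote the number of steps at which exactly k new parameters were introduced. Then N_n = 1, N_{n-1} = 1, and N_k ≥ 1 for every k with 0 ≤ k ≤ n. -/
/-- Number of fresh parameters introduced by the `i`-th cube of the sequence: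
coordinates whose parameter does not occur in any earlier cube. -/
def newCount {m n : ℕ} (C : Fin m → Fin n → ℕ × Bool) (i : Fin m) : ℕ :=
  (Finset.univ.filter
    (fun j : Fin n => ∀ i' : Fin m, i' < i → (C i' j).1 ≠ (C i j).1)).card

/-- The sequence is a 'strictly positive probability' path: each added cube
maximizes the number of fresh parameters among all cubes addable at that
step. -/
def Greedy {m n : ℕ} (C : Fin m → Fin n → ℕ × Bool) : Prop :=
  ∀ (i : Fin m) (c : Fin n → ℕ × Bool),
    (∀ i' : Fin m, i' < i → ∃ j, (c j).1 = (C i' j).1 ∧ (c j).2 ≠ (C i' j).2) →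
    (Finset.univ.filter
      (fun j : Fin n => ∀ i' : Fin m, i' < i → (C i' j).1 ≠ (c j).1)).card
      ≤ newCount C i


/-! Every cube after the first conflicts with the first one in a coordinate that is then not fresh,
so only the first cube has `n` fresh parameters. If cube `i` has `k ≥ 1` fresh parameters, flipping
one of them and giving the other `k - 1` a parameter used nowhere yields a cube conflicting with
cubes `0, …, i`. As the packing is not extensible, this cube fails to conflict with some later
cube; at the first such step `t` it was addable, so greediness gives `newCount C t ≥ k - 1`.
Applied to the last cube with more than `k` fresh parameters, this produces a cube with exactly `k`.
A cube after cube `1` with `n - 1` fresh parameters would conflict with cubes `0` and `1` in its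
single non-fresh coordinate, so cubes `0` and `1` would agree there; but that is also the only
coordinate in which cube `1` can conflict with cube `0`. -/

open Finset

/-- Some coordinate carries `t` in one cube and `t + 1` in the other. -/
def Conflicts {n : ℕ} {α : Type*} (c d : Fin n → α × Bool) : Prop :=
  ∃ j, (c j).1 = (d j).1 ∧ (c j).2 ≠ (d j).2

theorem nonempty_of_not_addable {ι : Type*} {n : ℕ} {α : Type*} {G : ι → Fin n → α × Bool}
    (h : ¬Addable G) : Nonempty ι := by
  by_contra hι
  exact h ⟨fun _ => (Sum.inr 0, true), fun i => (hι ⟨i⟩).elim⟩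

theorem exists_not_conflicts_of_not_addable {ι : Type*} {n : ℕ} {α : Type*}
    {G : ι → Fin n → α × Bool} (h : ¬Addable G) (c : Fin n → α × Bool) :
    ∃ i, ¬Conflicts c (G i) := by
  by_contra! hc
  refine h ⟨fun j => (Sum.inl (c j).1, (c j).2), fun i => ?_⟩
  obtain ⟨j, h₁, h₂⟩ := hc i
  exact ⟨j, by simp [h₁], h₂⟩

section Path

variable {m n : ℕ} {C : Fin m → Fin n → ℕ × Bool}

theorem pos_of_not_addable (h : ¬Addable C) : 0 < m :=
  Fin.pos_iff_nonempty.mpr (nonempty_of_not_addable h)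

def freshCoords (C : Fin m → Fin n → ℕ × Bool) (i : Fin m) (c : Fin n → ℕ × Bool) :
    Finset (Fin n) :=
  univ.filter fun j => ∀ i' : Fin m, i' < i → (C i' j).1 ≠ (c j).1

theorem newCount_eq_card_freshCoords (i : Fin m) : newCount C i = (freshCoords C i (C i)).card :=
  rfl

theorem Greedy.card_freshCoords_le (hgreedy : Greedy C) {i : Fin m} {c : Fin n → ℕ × Bool}
    (hc : ∀ i' < i, Conflicts c (C i')) : (freshCoords C i c).card ≤ newCount C i :=
  hgreedy i c hc

theorem not_mem_freshCoords {i i' : Fin m} {c : Fin n → ℕ × Bool} {j : Fin n} (hi : i' < i)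
    (hj : (C i' j).1 = (c j).1) : j ∉ freshCoords C i c := by
  simp only [freshCoords, mem_filter, mem_univ, true_and, not_forall, not_not]
  exact ⟨i', hi, hj⟩

theorem freshCoords_anti {a b : Fin m} (hab : a ≤ b) (c : Fin n → ℕ × Bool) :
    freshCoords C b c ⊆ freshCoords C a c :=
  monotone_filter_right _ fun _ _ hj i' hi' => hj i' (hi'.trans_le hab)

theorem eq_of_not_mem_freshCoords {i : Fin m} {c : Fin n → ℕ × Bool}
    (hcard : n ≤ (freshCoords C i c).card + 1) {j j' : Fin n} (hj : j ∉ freshCoords C i c)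
    (hj' : j' ∉ freshCoords C i c) : j = j' := by
  have : (freshCoords C i c)ᶜ.card ≤ 1 := by
    rw [card_compl, Fintype.card_fin]
    omega
  exact card_le_one.mp this j (mem_compl.mpr hj) j' (mem_compl.mpr hj')

theorem newCount_mk_zero (hm : 0 < m) : newCount C ⟨0, hm⟩ = n := by
  rw [newCount, filter_true_of_mem fun j _ i' hi' => absurd (Fin.lt_def.mp hi') (Nat.not_lt_zero _),
    card_univ, Fintype.card_fin]

theorem IsPacking.newCount_lt (hpack : IsPacking C) {i i' : Fin m} (hi : i' < i) :
    newCount C i < n := by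
  obtain ⟨j, hj, -⟩ := hpack i' i hi.ne
  exact (card_lt_univ_of_notMem (not_mem_freshCoords hi hj)).trans_eq (Fintype.card_fin n)

theorem IsPacking.newCount_eq_self_iff (hpack : IsPacking C) {i : Fin m} :
    newCount C i = n ↔ i.val = 0 := by
  refine ⟨fun h => ?_, fun h => ?_⟩
  · by_contra h0
    exact (hpack.newCount_lt (i' := ⟨0, i.pos⟩) (Fin.lt_def.mpr (Nat.pos_of_ne_zero h0))).ne h
  · obtain ⟨i, hi⟩ := i
    subst h
    exact newCount_mk_zero hi

theorem Greedy.antitone_newCount (hpack : IsPacking C) (hgreedy : Greedy C) :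
    Antitone (newCount C) := fun a b hab =>
  calc newCount C b ≤ (freshCoords C a (C b)).card := card_le_card (freshCoords_anti hab _)
    _ ≤ newCount C a :=
      hgreedy.card_freshCoords_le fun i' hi' => hpack b i' (hi'.trans_le hab).ne'

theorem exists_unused_param (C : Fin m → Fin n → ℕ × Bool) : ∃ B, ∀ a j, (C a j).1 ≠ B := by
  obtain ⟨B, hB⟩ :=
    Infinite.exists_notMem_finset (univ.image fun p : Fin m × Fin n => (C p.1 p.2).1)
  exact ⟨B, fun a j h => hB (mem_image.mpr ⟨(a, j), mem_univ _, h⟩)⟩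

/-- Witness: cube `i` with one fresh coordinate flipped and the other fresh coordinates set to a
parameter used nowhere. -/
theorem IsPacking.exists_conflicts_le_card_freshCoords (hpack : IsPacking C) {i : Fin m}
    (hi : 1 ≤ newCount C i) :
    ∃ c, (∀ i' ≤ i, Conflicts c (C i')) ∧ ∀ t, newCount C i - 1 ≤ (freshCoords C t c).card := by
  classical
  set F := freshCoords C i (C i)
  obtain ⟨j₁, hj₁⟩ : F.Nonempty := card_pos.mp hi
  obtain ⟨B, hB⟩ := exists_unused_param C
  let c : Fin n → ℕ × Bool := fun j =>
    if j = j₁ then ((C i j).1, !(C i j).2) else if j ∈ F then (B, true) else C i j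
  refine ⟨c, fun i' hi' => ?_, fun t => ?_⟩
  · rcases hi'.eq_or_lt with rfl | hlt
    · exact ⟨j₁, by simp [c], by simp [c]⟩
    · obtain ⟨j, hj, hj'⟩ := hpack i i' hlt.ne'
      have hjF : j ∉ F := not_mem_freshCoords hlt hj.symm
      have hjj₁ : j ≠ j₁ := fun h => hjF (h ▸ hj₁)
      exact ⟨j, by simp [c, hjF, hjj₁, hj], by simpa [c, hjF, hjj₁] using hj'⟩
  · rw [newCount_eq_card_freshCoords, ← card_erase_of_mem hj₁]
    refine card_le_card fun j hj => ?_
    obtain ⟨hjj₁, hjF⟩ := mem_erase.mp hj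
    simp only [freshCoords, mem_filter, mem_univ, true_and]
    intro i' _
    simpa [c, hjj₁, hjF] using hB i' j

theorem Greedy.exists_lt_card_freshCoords_le (hnonext : ¬Addable C) (hgreedy : Greedy C)
    {i : Fin m} {c : Fin n → ℕ × Bool} (hc : ∀ i' ≤ i, Conflicts c (C i')) :
    ∃ t, i < t ∧ (freshCoords C t c).card ≤ newCount C t := by
  obtain ⟨t, ht, hmin⟩ := wellFounded_lt.has_min {a | ¬Conflicts c (C a)}
    (exists_not_conflicts_of_not_addable hnonext c)
  refine ⟨t, lt_of_not_ge fun h => ht (hc t h), hgreedy.card_freshCoords_le fun i' hi' => ?_⟩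
  by_contra h
  exact hmin i' h hi'

theorem Greedy.exists_lt_pred_le_newCount (hpack : IsPacking C) (hnonext : ¬Addable C)
    (hgreedy : Greedy C) {i : Fin m} (hi : 1 ≤ newCount C i) :
    ∃ t, i < t ∧ newCount C i - 1 ≤ newCount C t := by
  obtain ⟨c, hc, hcard⟩ := hpack.exists_conflicts_le_card_freshCoords hi
  obtain ⟨t, hit, ht⟩ := hgreedy.exists_lt_card_freshCoords_le hnonext hc
  exact ⟨t, hit, (hcard t).trans ht⟩

theorem Greedy.exists_newCount_eq (hpack : IsPacking C) (hnonext : ¬Addable C)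
    (hgreedy : Greedy C) {k : ℕ} (hk : k ≤ n) : ∃ i, newCount C i = k := by
  have hm : 0 < m := pos_of_not_addable hnonext
  rcases hk.eq_or_lt with rfl | hk
  · exact ⟨_, newCount_mk_zero hm⟩
  obtain ⟨i, hi, hmax⟩ := (univ.filter fun i => k < newCount C i).exists_max_image id
    ⟨⟨0, hm⟩, by simpa [newCount_mk_zero hm] using hk⟩
  obtain ⟨-, hi⟩ := mem_filter.mp hi
  obtain ⟨t, hit, ht⟩ := hgreedy.exists_lt_pred_le_newCount hpack hnonext (i := i) (by omega)
  have htk : newCount C t ≤ k := by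
    by_contra! h
    exact hit.not_ge (hmax t (mem_filter.mpr ⟨mem_univ _, h⟩))
  exact ⟨t, by omega⟩

theorem IsPacking.newCount_add_one_lt (hpack : IsPacking C) {i₀ i₁ i : Fin m} (h₀₁ : i₀ < i₁)
    (h₁ : i₁ < i) (hi₁ : n ≤ newCount C i₁ + 1) : newCount C i + 1 < n := by
  by_contra! hi
  obtain ⟨j, hj₀, hb₀⟩ := hpack i i₀ (h₀₁.trans h₁).ne'
  obtain ⟨j', hj₁, hb₁⟩ := hpack i i₁ h₁.ne'
  obtain rfl : j = j' := eq_of_not_mem_freshCoords hi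
    (not_mem_freshCoords (h₀₁.trans h₁) hj₀.symm) (not_mem_freshCoords h₁ hj₁.symm)
  have hb : (C i₁ j).2 = (C i₀ j).2 := by
    revert hb₀ hb₁
    cases (C i j).2 <;> cases (C i₀ j).2 <;> cases (C i₁ j).2 <;> simp
  obtain ⟨j'', hj'', hb''⟩ := hpack i₁ i₀ h₀₁.ne'
  obtain rfl : j'' = j := eq_of_not_mem_freshCoords hi₁ (not_mem_freshCoords h₀₁ hj''.symm)
    (not_mem_freshCoords h₀₁ (hj₀.symm.trans hj₁))
  exact hb'' hb

theorem Greedy.newCount_eq_pred_iff (hpack : IsPacking C) (hnonext : ¬Addable C)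
    (hgreedy : Greedy C) (hn : 1 ≤ n) {i : Fin m} : newCount C i = n - 1 ↔ i.val = 1 := by
  have hm : 0 < m := pos_of_not_addable hnonext
  have h₀ : ∀ {i : Fin m}, i.val = 1 → (⟨0, hm⟩ : Fin m) < i :=
    fun h => Fin.lt_def.mpr (by simp [h])
  have hsecond : ∀ {i : Fin m}, i.val = 1 → newCount C i = n - 1 := fun {i} h => by
    obtain ⟨t, h0t, ht⟩ :=
      hgreedy.exists_lt_pred_le_newCount hpack hnonext (i := ⟨0, hm⟩) (by rwa [newCount_mk_zero])
    have hit : i ≤ t := Fin.le_def.mpr (h.trans_le h0t)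
    rw [newCount_mk_zero] at ht
    have := hgreedy.antitone_newCount hpack hit
    have := hpack.newCount_lt (h₀ h)
    omega
  refine ⟨fun h => ?_, hsecond⟩
  have hi0 : i.val ≠ 0 := fun h0 => by
    rw [hpack.newCount_eq_self_iff.mpr h0] at h
    omega
  by_contra hi1
  have h1i : (⟨1, by omega⟩ : Fin m) < i := Fin.lt_def.mpr (by simp; omega)
  have := hpack.newCount_add_one_lt (h₀ rfl) h1i (by rw [hsecond rfl]; omega)
  omega

end Path

theorem stmt_13_general {m n : ℕ} (hn : 1 ≤ n) (C : Fin m → Fin n → ℕ × Bool)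
    (hpack : IsPacking C) (hnonext : ¬ Addable C)
    (hgreedy : Greedy C) :
    (Finset.univ.filter (fun i => newCount C i = n)).card = 1 ∧
    (Finset.univ.filter (fun i => newCount C i = n - 1)).card = 1 ∧
    ∀ k ≤ n, 1 ≤ (Finset.univ.filter (fun i => newCount C i = k)).card := by
  have hm : 0 < m := pos_of_not_addable hnonext
  obtain ⟨t, ht⟩ := hgreedy.exists_newCount_eq hpack hnonext (Nat.sub_le n 1)
  have hm₂ : 1 < m := (hgreedy.newCount_eq_pred_iff hpack hnonext hn).mp ht ▸ t.isLt
  refine ⟨card_eq_one.mpr ⟨⟨0, hm⟩, ?_⟩, card_eq_one.mpr ⟨⟨1, hm₂⟩, ?_⟩, fun k hk => ?_⟩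
  · ext i
    simp [hpack.newCount_eq_self_iff, Fin.ext_iff]
  · ext i
    simp [hgreedy.newCount_eq_pred_iff hpack hnonext hn, Fin.ext_iff]
  · obtain ⟨i, hi⟩ := hgreedy.exists_newCount_eq hpack hnonext hk
    exact card_pos.mpr ⟨i, mem_filter.mpr ⟨mem_univ _, hi⟩⟩

/-- Along a maximal-fresh-parameter path building a
non-extensible packing, `N_n = 1`, `N_{n-1} = 1` and `N_k ≥ 1` for all
`0 ≤ k ≤ n`, where `N_k` counts the steps introducing exactly `k` fresh
parameters. -/
theorem stmt_13 {m n : ℕ} (hn : 1 ≤ n) (C : Fin m → Fin n → ℕ × Bool)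
    (hpack : IsPacking C) (hsmall : m < 2 ^ n) (hnonext : ¬ Addable C)
    (hgreedy : Greedy C) :
    (Finset.univ.filter (fun i => newCount C i = n)).card = 1 ∧
    (Finset.univ.filter (fun i => newCount C i = n - 1)).card = 1 ∧
    ∀ k ≤ n, 1 ≤ (Finset.univ.filter (fun i => newCount C i = k)).card :=
  stmt_13_general hn C hpack hnonext hgreedy
end

section
/- Consider sequential random packing of cubes z+[0,1]^n with z ∈ (1/N)Z^n ∩ [0,1]^n into [0,2]^n (cubes must be pairwise non-overlapping: two cubes z+[0,1]^n, z'+[0,1]^n overlap unless there is a coordinate i with {z_i, z'_i} = {0,1}). Suppose the first cube z^1+[0,1]^n is placed and let I = {i : z^1_i ∈ {0,1}}. Then the minimal possible number of cubes in any maximal (non-extensible) packing containing z^1+[0,1]^n is exactly |I| + 1. -/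
/-!
For `i ∈ I` let `fᵢ` be `z¹` with its `i`-th coordinate moved to the opposite face (`0 ↔ N`).
Lower bound: in a maximal packing `P`, each `fᵢ` overlaps some `z ∈ P`, and `z ≠ z¹`; since `fᵢ`
agrees with `z¹` off `i`, the coordinate `i` is the only one at which `z` and `z¹` are opposite.
So distinct `i ∈ I` give distinct cubes of `P \ {z¹}`.
Upper bound: let `aᵢ` agree with `z¹` before `i`, equal `N - z¹ i` at `i` and `1` after `i`. The
cubes `z¹` and `aᵢ` (`i ∈ I`) are pairwise separated (`aᵢ` and `aⱼ`, `i < j`, at `i`). A cube `w`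
separated from `z¹` overlaps `aᵢ` for the first coordinate `i` at which `w` and `z¹` are opposite:
before `i` the cube `aᵢ` agrees with `z¹`, at `i` it is opposite to `z¹`, and after `i` its
value `1` is opposite to nothing since `N ≥ 2`.
-/

/-- Two grid cubes `z/N + [0,1]^n`, `z'/N + [0,1]^n` in `[0,2]^n` (numerators
`z, z' ∈ {0,…,N}^n`) are non-overlapping iff in some coordinate one numerator
is `0` and the other is `N`. -/
def CubeNonOv (n N : ℕ) (z z' : Fin n → ℕ) : Prop :=
  ∃ i, (z i = 0 ∧ z' i = N) ∨ (z i = N ∧ z' i = 0)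

open Finset Function

-- `CubeNonOv n N z z'` unfolds to `∃ i, Antipodal N (z i) (z' i)`.
def Antipodal (N x y : ℕ) : Prop := (x = 0 ∧ y = N) ∨ (x = N ∧ y = 0)

def boundaryCoords {n : ℕ} (N : ℕ) (z : Fin n → ℕ) : Finset (Fin n) :=
  Finset.univ.filter (fun i : Fin n => z i = 0 ∨ z i = N)

def stepCube {n : ℕ} (N : ℕ) (z : Fin n → ℕ) (i : Fin n) : Fin n → ℕ :=
  fun j => if j < i then z j else if j = i then N - z i else 1

variable {n N x y : ℕ} {z z' w : Fin n → ℕ} {i j : Fin n}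

theorem Antipodal.symm (h : Antipodal N x y) : Antipodal N y x := by
  unfold Antipodal at *; omega

theorem Antipodal.eq_zero_or_eq_right (h : Antipodal N x y) : y = 0 ∨ y = N := by
  unfold Antipodal at h; omega

theorem Antipodal.ne (hN : N ≠ 0) (h : Antipodal N x y) : x ≠ y := by
  unfold Antipodal at h; omega

theorem antipodal_sub_self (hx : x = 0 ∨ x = N) : Antipodal N (N - x) x := by
  unfold Antipodal; omega

theorem not_antipodal_one (hN : 2 ≤ N) : ¬Antipodal N x 1 := by
  unfold Antipodal; omega

theorem CubeNonOv.symm (h : CubeNonOv n N z z') : CubeNonOv n N z' z :=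
  let ⟨i, hi⟩ := h; ⟨i, Antipodal.symm hi⟩

theorem CubeNonOv.ne (hN : N ≠ 0) (h : CubeNonOv n N z z') : z ≠ z' := by
  obtain ⟨i, hi⟩ := h
  exact fun hzz' => Antipodal.ne hN hi (congrFun hzz' i)

theorem mem_boundaryCoords : i ∈ boundaryCoords N z ↔ z i = 0 ∨ z i = N := by
  simp [boundaryCoords]

theorem antipodal_iff_eq_of_not_cubeNonOv_update {z₁ : Fin n → ℕ} (hz : CubeNonOv n N z z₁)
    (h : ¬CubeNonOv n N (update z₁ i (N - z₁ i)) z) (j : Fin n) :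
    Antipodal N (z j) (z₁ j) ↔ j = i := by
  have honly : ∀ j, Antipodal N (z j) (z₁ j) → j = i := fun j hj => by
    by_contra hji
    exact h ⟨j, by rw [update_of_ne hji]; exact hj.symm⟩
  obtain ⟨k, hk⟩ := hz
  exact ⟨honly j, by rintro rfl; exact honly k hk ▸ hk⟩

theorem card_boundaryCoords_add_one_le_card {z₁ : Fin n → ℕ} {P : Finset (Fin n → ℕ)}
    (hz₁ : ∀ i, z₁ i ≤ N) (hz₁P : z₁ ∈ P)
    (hpack : ∀ a ∈ P, ∀ b ∈ P, a ≠ b → CubeNonOv n N a b)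
    (hmax : ¬∃ w : Fin n → ℕ, (∀ i, w i ≤ N) ∧ ∀ z ∈ P, CubeNonOv n N w z) :
    #(boundaryCoords N z₁) + 1 ≤ #P := by
  have hcover : ∀ i ∈ boundaryCoords N z₁,
      ∃ z ∈ P.erase z₁, ∀ j, Antipodal N (z j) (z₁ j) ↔ j = i := by
    intro i hi
    have hbound : ∀ j, update z₁ i (N - z₁ i) j ≤ N := by
      intro j
      rcases eq_or_ne j i with rfl | hji
      · simp
      · simpa [update_of_ne hji] using hz₁ j
    obtain ⟨z, hzP, hz⟩ : ∃ z ∈ P, ¬CubeNonOv n N (update z₁ i (N - z₁ i)) z := by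
      by_contra! h
      exact hmax ⟨_, hbound, h⟩
    have hzz₁ : z ≠ z₁ := by
      rintro rfl
      exact hz ⟨i, by rw [update_self]; exact antipodal_sub_self (mem_boundaryCoords.1 hi)⟩
    exact ⟨z, mem_erase.2 ⟨hzz₁, hzP⟩,
      antipodal_iff_eq_of_not_cubeNonOv_update (hpack z hzP z₁ hz₁P hzz₁) hz⟩
  have hcard : #(boundaryCoords N z₁) ≤ #(P.erase z₁) :=
    card_le_card_of_forall_subsingleton
      (fun (i : Fin n) (z : Fin n → ℕ) => ∀ j, Antipodal N (z j) (z₁ j) ↔ j = i) hcover fun _ _ i hi i' hi' => (hi'.2 i).1 ((hi.2 i).2 rfl)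
  rw [card_erase_of_mem hz₁P] at hcard
  have := card_pos.2 ⟨z₁, hz₁P⟩
  omega

theorem stepCube_of_lt (h : j < i) : stepCube N z i j = z j := by
  simp [stepCube, h]

theorem stepCube_self : stepCube N z i i = N - z i := by
  simp [stepCube]

theorem stepCube_of_gt (h : i < j) : stepCube N z i j = 1 := by
  simp [stepCube, h.not_gt, h.ne']

theorem stepCube_le (hz : ∀ j, z j ≤ N) (hN : 1 ≤ N) : stepCube N z i j ≤ N := by
  unfold stepCube
  split_ifs
  exacts [hz j, Nat.sub_le N _, hN]

theorem cubeNonOv_stepCube (hi : i ∈ boundaryCoords N z) : CubeNonOv n N z (stepCube N z i) :=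
  ⟨i, by rw [stepCube_self]; exact (antipodal_sub_self (mem_boundaryCoords.1 hi)).symm⟩

theorem cubeNonOv_stepCube_of_lt {i' : Fin n} (hi : i ∈ boundaryCoords N z) (h : i < i') :
    CubeNonOv n N (stepCube N z i) (stepCube N z i') :=
  ⟨i, by rw [stepCube_self, stepCube_of_lt h]; exact antipodal_sub_self (mem_boundaryCoords.1 hi)⟩

theorem exists_not_cubeNonOv_stepCube (hN : 2 ≤ N) (hw : CubeNonOv n N w z) :
    ∃ i ∈ boundaryCoords N z, ¬CubeNonOv n N w (stepCube N z i) := by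
  classical
  obtain ⟨i, hi, hmin⟩ := (univ.filter fun j => Antipodal N (w j) (z j)).exists_min_image id
    (let ⟨j, hj⟩ := hw; ⟨j, mem_filter.2 ⟨mem_univ j, hj⟩⟩)
  simp only [mem_filter, mem_univ, true_and, id] at hi hmin
  refine ⟨i, mem_boundaryCoords.2 hi.eq_zero_or_eq_right, ?_⟩
  rintro ⟨j, hj⟩
  rcases lt_trichotomy j i with hji | rfl | hij
  · rw [stepCube_of_lt hji] at hj
    exact (hmin j hj).not_gt hji
  · rw [stepCube_self] at hj
    unfold Antipodal at hi
    omega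
  · rw [stepCube_of_gt hij] at hj
    exact not_antipodal_one hN hj

theorem exists_maximal_packing_card_eq {z₁ : Fin n → ℕ} (hN : 2 ≤ N) (hz₁ : ∀ i, z₁ i ≤ N) :
    ∃ P : Finset (Fin n → ℕ), z₁ ∈ P ∧ (∀ z ∈ P, ∀ i, z i ≤ N) ∧
      (∀ a ∈ P, ∀ b ∈ P, a ≠ b → CubeNonOv n N a b) ∧
      (¬∃ w : Fin n → ℕ, (∀ i, w i ≤ N) ∧ ∀ z ∈ P, CubeNonOv n N w z) ∧
      #P = #(boundaryCoords N z₁) + 1 := by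
  have hN0 : N ≠ 0 := by omega
  have hstep : ∀ i ∈ boundaryCoords N z₁, ∀ i' ∈ boundaryCoords N z₁, i ≠ i' →
      CubeNonOv n N (stepCube N z₁ i) (stepCube N z₁ i') := by
    intro i hi i' hi' hii'
    rcases hii'.lt_or_gt with h | h
    exacts [cubeNonOv_stepCube_of_lt hi h, (cubeNonOv_stepCube_of_lt hi' h).symm]
  refine ⟨insert z₁ ((boundaryCoords N z₁).image (stepCube N z₁)), mem_insert_self _ _,
    ?_, ?_, ?_, ?_⟩
  · simp only [mem_insert, mem_image]
    rintro _ (rfl | ⟨i, -, rfl⟩) j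
    exacts [hz₁ j, stepCube_le hz₁ (by omega)]
  · simp only [mem_insert, mem_image]
    rintro _ (rfl | ⟨i, hi, rfl⟩) _ (rfl | ⟨i', hi', rfl⟩) hab
    · exact absurd rfl hab
    · exact cubeNonOv_stepCube hi'
    · exact (cubeNonOv_stepCube hi).symm
    · exact hstep i hi i' hi' (ne_of_apply_ne _ hab)
  · rintro ⟨w, -, hw⟩
    obtain ⟨i, hi, hwi⟩ := exists_not_cubeNonOv_stepCube hN (hw z₁ (mem_insert_self _ _))
    exact hwi (hw _ (mem_insert_of_mem (mem_image_of_mem _ hi)))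
  · have hz₁_notMem : z₁ ∉ (boundaryCoords N z₁).image (stepCube N z₁) := by
      simp only [mem_image, not_exists, not_and]
      exact fun i hi => ((cubeNonOv_stepCube hi).ne hN0).symm
    rw [card_insert_of_notMem hz₁_notMem,
      card_image_of_injOn fun i hi i' hi' h =>
        by_contra fun hii' => (hstep i hi i' hi' hii').ne hN0 h]

/-- If the first cube `z¹` has `I = {i : z¹_i ∈ {0,N}}`, then
the minimal number of cubes of a maximal (non-extensible) packing of `[0,2]^n`
containing `z¹` is exactly `|I| + 1`. -/
theorem stmt_16 (n N : ℕ) (hN : 2 ≤ N) (z1 : Fin n → ℕ) (hz1 : ∀ i, z1 i ≤ N) :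
    (∀ P : Finset (Fin n → ℕ), z1 ∈ P → (∀ z ∈ P, ∀ i, z i ≤ N) →
      (∀ a ∈ P, ∀ b ∈ P, a ≠ b → CubeNonOv n N a b) →
      (¬ ∃ w : Fin n → ℕ, (∀ i, w i ≤ N) ∧ ∀ z ∈ P, CubeNonOv n N w z) →
      (Finset.univ.filter (fun i : Fin n => z1 i = 0 ∨ z1 i = N)).card + 1 ≤ P.card)
    ∧ (∃ P : Finset (Fin n → ℕ), z1 ∈ P ∧ (∀ z ∈ P, ∀ i, z i ≤ N) ∧
      (∀ a ∈ P, ∀ b ∈ P, a ≠ b → CubeNonOv n N a b) ∧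
      (¬ ∃ w : Fin n → ℕ, (∀ i, w i ≤ N) ∧ ∀ z ∈ P, CubeNonOv n N w z) ∧
      P.card = (Finset.univ.filter (fun i : Fin n => z1 i = 0 ∨ z1 i = N)).card + 1) :=
  ⟨fun _ hz1P _ hpack hmax => card_boundaryCoords_add_one_le_card hz1 hz1P hpack hmax,
    exists_maximal_packing_card_eq hN hz1⟩
end

section
/- Let G be a combinatorial torus cube packing in dimension n, and for each coordinate j let N_j(G) be the number of distinct parameters occurring in coordinate j of the cubes of G. Then the number of discrete torus cube packings P with vectors in (1/N)Z^n whose combinatorial type is G equals ∏_{j=1}^{n} ∏_{k=1}^{N_j(G)} (2N - 2(k-1)); in particular this number is positive whenever N ≥ max_j N_j(G), and since N_j(G) ≤ 2^{n-1} always holds for a packing, it is positive for N ≥ 2^n. -/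
/-- The parameters occurring in coordinate `j` of the packing `G`. -/
def coordParams {m n : ℕ} {α : Type*} [DecidableEq α]
    (G : Fin m → Fin n → α × Bool) (j : Fin n) : Finset α :=
  Finset.univ.image (fun i : Fin m => (G i j).1)

/-- The discrete torus cube packings (vectors in `(1/N)ℤ^n mod 2`, numerators
in `ZMod (2N)`) whose combinatorial type is `G`: each parameter `t` of
coordinate `j` is assigned a value `a j t`, with `t+1 ↦ a j t + N`, distinct
parameters of a coordinate getting distinct residue classes `{a, a+N}`. -/
def TypeIs {m n N : ℕ} {α : Type*} [DecidableEq α]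
    (G : Fin m → Fin n → α × Bool) (P : Fin m → Fin n → ZMod (2 * N)) : Prop :=
  ∃ a : Fin n → α → ZMod (2 * N),
    (∀ j : Fin n, ∀ p ∈ coordParams G j, ∀ p' ∈ coordParams G j, p ≠ p' →
      a j p ≠ a j p' ∧ a j p ≠ a j p' + (N : ZMod (2 * N))) ∧
    ∀ i j, P i j = a j (G i j).1 + (if (G i j).2 then (N : ZMod (2 * N)) else 0)

/-!
Reducing `ZMod (2N)` modulo `N` identifies exactly the two values `a`, `a + N` of a parameter
and its shift, so an admissible assignment of values to the parameters of one coordinate is a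
map into `ZMod (2N)` whose reduction to `ZMod N` is injective. Every fibre of the reduction has two
elements, so there are `N (N - 1) ⋯ (N - c + 1) · 2^c = ∏_{k < c} (2N - 2k)` such maps on `c`
parameters. Coordinates are independent, and the packing determines the assignment because every
parameter occurs in some cube.

For the bound, two cubes with different parameters in coordinate `j` must be separated in another
coordinate, so their orientations off `j` differ; picking one cube per parameter of coordinate `j`
injects these parameters into `Bool^(n-1)`.
-/

open Function Finset

section FiberwiseInjective

variable {S X Y D : Type*} [Fintype S] [Fintype Y]

theorem card_subtype_injective_fst_comp [Fintype D] :
    Nat.card {f : S → Y × D // Injective (Prod.fst ∘ f)}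
      = (Fintype.card Y).descFactorial (Fintype.card S) * Fintype.card D ^ Fintype.card S := by
  classical
  let e : {f : S → Y × D // Injective (Prod.fst ∘ f)} ≃ (S ↪ Y) × (S → D) :=
    ((Equiv.arrowProdEquivProdArrow S (fun _ => Y) (fun _ => D)).subtypeEquiv
        (p := fun f => Injective (Prod.fst ∘ f)) (q := fun g => Injective g.1)
        fun _ => Iff.rfl).trans
      (Equiv.prodSubtypeFstEquivSubtypeProd.trans
        (Equiv.prodCongr (Equiv.subtypeInjectiveEquivEmbedding S Y) (Equiv.refl _)))
  rw [Nat.card_congr e, Nat.card_eq_fintype_card, Fintype.card_prod, Fintype.card_embedding_eq,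
    Fintype.card_fun]

theorem card_subtype_injective_comp_of_card_fiber [Finite X] (π : X → Y) {d : ℕ}
    (hπ : ∀ y, Nat.card {x // π x = y} = d) :
    Nat.card {f : S → X // Injective (π ∘ f)}
      = (Fintype.card Y).descFactorial (Fintype.card S) * d ^ Fintype.card S := by
  let e : X ≃ Y × Fin d := (Equiv.sigmaFiberEquiv π).symm.trans <|
    (Equiv.sigmaCongrRight fun y => Finite.equivFinOfCardEq (hπ y)).trans (Equiv.sigmaEquivProd _ _)
  rw [← Fintype.card_fin d, ← card_subtype_injective_fst_comp]
  exact Nat.card_congr ((Equiv.arrowCongr (Equiv.refl S) e).subtypeEquiv fun _ => Iff.rfl)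

end FiberwiseInjective

def modHalf (N : ℕ) : ZMod (2 * N) →+* ZMod N := ZMod.castHom (dvd_mul_left N 2) (ZMod N)

section ModHalf

variable {N : ℕ} [NeZero N]

theorem modHalf_eq_zero_iff {d : ZMod (2 * N)} : modHalf N d = 0 ↔ d = 0 ∨ d = N := by
  have hN := NeZero.pos N
  have hd := d.val_lt
  have hNval : (N : ZMod (2 * N)).val = N := ZMod.val_natCast_of_lt (by omega)
  have hdN : d = N ↔ d.val = N :=
    ⟨fun h => h ▸ hNval, fun h => ZMod.val_injective _ (h.trans hNval.symm)⟩
  rw [modHalf, ZMod.castHom_apply, ZMod.cast_eq_val, ZMod.natCast_eq_zero_iff,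
    ← ZMod.val_eq_zero, hdN]
  constructor
  · rintro ⟨k, hk⟩
    have : k < 2 := by nlinarith
    interval_cases k <;> simp_all
  · rintro (h | h) <;> simp [h]

theorem modHalf_eq_iff {x y : ZMod (2 * N)} : modHalf N x = modHalf N y ↔ x = y ∨ x = y + N := by
  rw [← sub_eq_zero, ← map_sub, modHalf_eq_zero_iff, sub_eq_zero, sub_eq_iff_eq_add']

theorem card_fiber_modHalf (y : ZMod N) : Nat.card {x // modHalf N x = y} = 2 := by
  obtain ⟨x, rfl⟩ : ∃ x, modHalf N x = y := ZMod.castHom_surjective _ y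
  have hN : (N : ZMod (2 * N)) ≠ 0 := by
    rw [Ne, ZMod.natCast_eq_zero_iff]
    intro h
    have := Nat.le_of_dvd (NeZero.pos N) h
    have := NeZero.pos N
    omega
  have hx : x ≠ x + N := by simpa using hN
  calc Nat.card {x' // modHalf N x' = modHalf N x} = Nat.card ({x, x + N} : Set _) := by
        simp_rw [modHalf_eq_iff]; rfl
    _ = 2 := by rw [Nat.card_coe_set_eq, Set.ncard_pair hx]

theorem card_subtype_injective_modHalf_comp (S : Type*) [Fintype S] :
    Nat.card {b : S → ZMod (2 * N) // Injective (modHalf N ∘ b)}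
      = ∏ k ∈ range (Fintype.card S), (2 * N - 2 * k) := by
  rw [card_subtype_injective_comp_of_card_fiber _ card_fiber_modHalf, ZMod.card,
    Nat.descFactorial_eq_prod_range, mul_comm]
  simp_rw [← Nat.mul_sub, prod_mul_distrib, prod_const, card_range]

end ModHalf

theorem IsPacking.exists_orientation_ne {m n : ℕ} {α : Type*} {G : Fin m → Fin n → α × Bool}
    (hG : IsPacking G) {i i' : Fin m} {j : Fin n} (h : (G i j).1 ≠ (G i' j).1) :
    ∃ j' ≠ j, (G i j').2 ≠ (G i' j').2 := by
  obtain ⟨j', hj'1, hj'2⟩ := hG i i' (by rintro rfl; exact h rfl)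
  exact ⟨j', by rintro rfl; exact h hj'1, hj'2⟩

theorem IsPacking.card_coordParams_le {m n : ℕ} {α : Type*} [DecidableEq α]
    {G : Fin m → Fin n → α × Bool} (hG : IsPacking G) (j : Fin n) :
    (coordParams G j).card ≤ 2 ^ (n - 1) := by
  have hrep (p : coordParams G j) : ∃ i, (G i j).1 = p := by
    simpa [coordParams] using p.2
  choose rep hrep using hrep
  have hinj : Injective fun p (j' : {j' // j' ≠ j}) => (G (rep p) j').2 := by
    intro p p' h
    by_contra hne
    obtain ⟨j', hj', hne'⟩ := hG.exists_orientation_ne (i := rep p) (i' := rep p') (j := j)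
      (by rw [hrep, hrep]; exact Subtype.coe_ne_coe.2 hne)
    exact hne' (congrFun h ⟨j', hj'⟩)
  calc (coordParams G j).card = Fintype.card (coordParams G j) := (Fintype.card_coe _).symm
    _ ≤ Fintype.card ({j' // j' ≠ j} → Bool) := Fintype.card_le_of_injective _ hinj
    _ = 2 ^ (n - 1) := by simp [Fintype.card_subtype_compl]

section CombinatorialType

variable {m n N : ℕ} {α : Type*} [DecidableEq α] (G : Fin m → Fin n → α × Bool)

theorem mem_coordParams (i : Fin m) (j : Fin n) : (G i j).1 ∈ coordParams G j :=
  mem_image_of_mem _ (mem_univ i)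

def realizeType (b : ∀ j, coordParams G j → ZMod (2 * N)) : Fin m → Fin n → ZMod (2 * N) :=
  fun i j => b j ⟨(G i j).1, mem_coordParams G i j⟩ + if (G i j).2 then (N : ZMod (2 * N)) else 0

theorem realizeType_injective : Injective (realizeType G (N := N)) := by
  intro b b' h
  funext j ⟨p, hp⟩
  obtain ⟨i, -, rfl⟩ := mem_image.1 hp
  exact add_right_cancel (congrFun (congrFun h i) j)

theorem typeIs_iff_exists_realizeType [NeZero N] {P : Fin m → Fin n → ZMod (2 * N)} :
    TypeIs G P ↔ ∃ b : ∀ j, coordParams G j → ZMod (2 * N),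
      (∀ j, Injective (modHalf N ∘ b j)) ∧ realizeType G b = P := by
  constructor
  · rintro ⟨a, ha, hP⟩
    refine ⟨fun j p => a j p, fun j p p' hpp' => Subtype.ext ?_, funext₂ fun i j => (hP i j).symm⟩
    by_contra hne
    have := ha j p p.2 p' p'.2 hne
    rcases modHalf_eq_iff.1 hpp' with h | h
    exacts [this.1 h, this.2 h]
  · rintro ⟨b, hb, rfl⟩
    refine ⟨fun j p => if hp : p ∈ coordParams G j then b j ⟨p, hp⟩ else 0,
      fun j p hp p' hp' hne => ?_, fun i j => by simp [realizeType, mem_coordParams]⟩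
    have := (hb j).ne (a₁ := ⟨p, hp⟩) (a₂ := ⟨p', hp'⟩) (by simpa using hne)
    rw [comp_apply, comp_apply, Ne, modHalf_eq_iff, not_or] at this
    simpa [hp, hp'] using this

theorem card_typeIs [NeZero N] :
    Nat.card {P : Fin m → Fin n → ZMod (2 * N) // TypeIs G P}
      = ∏ j, ∏ k ∈ range (coordParams G j).card, (2 * N - 2 * k) := by
  have himage : {P | TypeIs G P} = realizeType G '' {b | ∀ j, Injective (modHalf N ∘ b j)} := by
    ext P
    simp [typeIs_iff_exists_realizeType]
  calc Nat.card {P : Fin m → Fin n → ZMod (2 * N) // TypeIs G P}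
      = Nat.card {b : ∀ j, coordParams G j → ZMod (2 * N) // ∀ j, Injective (modHalf N ∘ b j)} := by
        rw [← Set.coe_ofPred, himage, Nat.card_image_of_injective (realizeType_injective G)]; rfl
    _ = ∏ j, Nat.card {b : coordParams G j → ZMod (2 * N) // Injective (modHalf N ∘ b)} := by
        rw [Nat.card_congr (Equiv.subtypePiEquivPi (β := fun j => coordParams G j → ZMod (2 * N))
          (p := fun _ b => Injective (modHalf N ∘ b))), Nat.card_pi]
    _ = _ := by simp_rw [card_subtype_injective_modHalf_comp, Fintype.card_coe]

end CombinatorialType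

/-- The number of discrete torus cube packings with grid
parameter `N` of combinatorial type `G` is
`∏_{j=1}^n ∏_{k=1}^{N_j(G)} (2N - 2(k-1))`; moreover `N_j(G) ≤ 2^(n-1)` for
every coordinate `j`, so the number is positive whenever `N ≥ 2^n`. -/
theorem stmt_19 {m n N : ℕ} {α : Type*} [DecidableEq α] (hN : 1 ≤ N)
    (G : Fin m → Fin n → α × Bool) (hpack : IsPacking G) :
    Nat.card {P : Fin m → Fin n → ZMod (2 * N) // TypeIs G P}
      = ∏ j : Fin n, ∏ k ∈ Finset.range (coordParams G j).card, (2 * N - 2 * k) ∧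
    (∀ j : Fin n, (coordParams G j).card ≤ 2 ^ (n - 1)) ∧
    (2 ^ n ≤ N → 0 < Nat.card {P : Fin m → Fin n → ZMod (2 * N) // TypeIs G P}) := by
  have : NeZero N := ⟨by omega⟩
  refine ⟨card_typeIs G, hpack.card_coordParams_le, fun hNn => ?_⟩
  rw [card_typeIs]
  refine prod_pos fun j _ => prod_pos fun k hk => ?_
  have hk : k < 2 ^ (n - 1) := (mem_range.1 hk).trans_le (hpack.card_coordParams_le j)
  have : 2 ^ (n - 1) ≤ 2 ^ n := Nat.pow_le_pow_right two_pos (n.sub_le 1)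
  omega
end
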